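/- If a gate H is an induced subgraph of a graph G, then H is an induced subgraph of some atom of G in the clique-separator decomposition of G; in particular, no clique separator of G can disconnect the vertex set of H. -/

import Mathlib

/-- A maximal clique (a maximal complete vertex set) of a simple graph. -/
def IsMaxClique {V : Type} (G : SimpleGraph V) (s : Set V) : Prop :=
  G.IsClique s ∧ ∀ t : Set V, G.IsClique t → s ⊆ t → s = t

/-- The number of maximal cliques of a graph. -/
noncomputable def numMaxCliques {V : Type} (G : SimpleGraph V) : ℕ :=
  {s : Set V | IsMaxClique G s}.ncard

/-- The graph obtained from `G` and a chordless path on `l` new vertices by joining the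
first vertex of the path to every vertex of `A` and the last vertex to every vertex of `B`. -/
def joinPath {V : Type} (G : SimpleGraph V) (A B : Set V) (l : ℕ) :
    SimpleGraph (V ⊕ Fin l) where
  Adj x y :=
    match x, y with
    | Sum.inl a, Sum.inl b => G.Adj a b
    | Sum.inl a, Sum.inr i => (i.val = 0 ∧ a ∈ A) ∨ (i.val = l - 1 ∧ a ∈ B)
    | Sum.inr i, Sum.inl a => (i.val = 0 ∧ a ∈ A) ∨ (i.val = l - 1 ∧ a ∈ B)
    | Sum.inr i, Sum.inr j => i.val + 1 = j.val ∨ j.val + 1 = i.val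
  symm := by
    constructor
    rintro (a | i) (b | j) h <;> simp_all <;> tauto
  loopless := by
    constructor
    rintro (a | i) h
    · exact G.loopless.irrefl a h
    · rcases h with h | h <;> omega

/-- Gates, defined recursively (up to isomorphism): chordless cycles `Cₙ`, `n ≥ 4`, are
gates, and joining a new chordless path to two disjoint maximal cliques of a gate
yields a gate. -/
inductive IsGate : {V : Type} → SimpleGraph V → Prop
  | cycle (n : ℕ) (hn : 4 ≤ n) : IsGate (SimpleGraph.cycleGraph n)
  | extend {V : Type} (G : SimpleGraph V) (C C' : Set V) (l : ℕ)
      (hG : IsGate G) (hC : IsMaxClique G C) (hC' : IsMaxClique G C')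
      (hdisj : Disjoint C C') (hl : 2 ≤ l) : IsGate (joinPath G C C' l)
  | iso {V W : Type} (G : SimpleGraph V) (H : SimpleGraph W)
      (hG : IsGate G) (e : G ≃g H) : IsGate H

/-- An EPT representation of `G`: a family of paths in a host tree such that two distinct
vertices are adjacent iff their paths share an edge of the tree. -/
structure EPTRep {V : Type} (G : SimpleGraph V) where
  VT : Type
  T : SimpleGraph VT
  tree : T.IsTree
  src : V → VT
  tgt : V → VT
  walk : (v : V) → T.Walk (src v) (tgt v)
  isPath : ∀ v, (walk v).IsPath
  adj_iff : ∀ v w : V, v ≠ w →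
    (G.Adj v w ↔ ∃ e : Sym2 VT, e ∈ (walk v).edges ∧ e ∈ (walk w).edges)

/-- The edge set of the path representing `v`. -/
def EPTRep.edges {V : Type} {G : SimpleGraph V} (R : EPTRep G) (v : V) :
    Set (Sym2 R.VT) := {e | e ∈ (R.walk v).edges}

/-- The representation is Helly: every nonempty pairwise edge-intersecting subfamily of
paths has a common edge. -/
def EPTRep.Helly {V : Type} {G : SimpleGraph V} (R : EPTRep G) : Prop :=
  ∀ S : Set V, S.Nonempty →
    (∀ u ∈ S, ∀ v ∈ S, (R.edges u ∩ R.edges v).Nonempty) →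
    (⋂ v ∈ S, R.edges v).Nonempty

/-- The host tree has maximum degree at most `h`. -/
def EPTRep.maxDegLE {V : Type} {G : SimpleGraph V} (R : EPTRep G) (h : ℕ) : Prop :=
  ∀ x : R.VT, (R.T.neighborSet x).ncard ≤ h

/-- The class `[h,2,2]`. -/
def InEPTClass (h : ℕ) {V : Type} (G : SimpleGraph V) : Prop :=
  ∃ R : EPTRep G, R.maxDegLE h

/-- Helly EPT graphs. -/
def IsHellyEPT {V : Type} (G : SimpleGraph V) : Prop :=
  ∃ R : EPTRep G, R.Helly

/-- The class Helly `[h,2,2]`. -/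
def InHellyClass (h : ℕ) {V : Type} (G : SimpleGraph V) : Prop :=
  ∃ R : EPTRep G, R.Helly ∧ R.maxDegLE h

/-- Three paths of the representation form a claw at some claw of the host tree. -/
def EPTRep.FormsClaw {V : Type} {G : SimpleGraph V} (R : EPTRep G) (a b c : V) : Prop :=
  ∃ q x y z : R.VT, R.T.Adj q x ∧ R.T.Adj q y ∧ R.T.Adj q z ∧
    x ≠ y ∧ y ≠ z ∧ x ≠ z ∧
    s(q, x) ∈ R.edges a ∧ s(q, y) ∈ R.edges a ∧
    s(q, y) ∈ R.edges b ∧ s(q, z) ∈ R.edges b ∧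
    s(q, x) ∈ R.edges c ∧ s(q, z) ∈ R.edges c

/-- A multipie of size `k` whose paths are those representing the vertices in `S`. -/
def IsMultipie {V : Type} {G : SimpleGraph V} (R : EPTRep G) (k : ℕ) (S : Set V) : Prop :=
  ∃ (q : R.VT) (qi : Fin k → R.VT), Function.Injective qi ∧
    (∀ i, R.T.Adj q (qi i)) ∧
    (∀ v ∈ S, {i : Fin k | qi i ∈ (R.walk v).support}.ncard = 2) ∧
    (∀ u ∈ S, ∀ v ∈ S, ∀ i j : Fin k, i ≠ j →
      qi i ∈ (R.walk u).support → qi j ∈ (R.walk u).support →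
      qi i ∈ (R.walk v).support → qi j ∈ (R.walk v).support → u = v) ∧
    (∀ i, 2 ≤ {v ∈ S | s(q, qi i) ∈ R.edges v}.ncard) ∧
    (∀ a ∈ S, ∀ b ∈ S, ∀ c ∈ S, ¬ R.FormsClaw a b c)

/-- The next index around a cycle. -/
def finNext {k : ℕ} (hk : 0 < k) (i : Fin k) : Fin k :=
  ⟨(i.val + 1) % k, Nat.mod_lt _ hk⟩

/-- `G` has a clique separator: a complete vertex set whose removal disconnects the graph. -/
def HasCliqueSep {V : Type} (G : SimpleGraph V) : Prop :=
  ∃ C : Set V, G.IsClique C ∧ ¬ (G.induce Cᶜ).Preconnected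

/-- An atom of `G`: a maximal vertex subset inducing a connected subgraph without clique
separators. -/
def IsAtomOf {V : Type} (G : SimpleGraph V) (A : Set V) : Prop :=
  (G.induce A).Connected ∧ ¬ HasCliqueSep (G.induce A) ∧
    ∀ B : Set V, A ⊆ B → (G.induce B).Connected → ¬ HasCliqueSep (G.induce B) → A = B

/-!
A gate has no clique separator at all. A clique of a chordless cycle of length at least four is
contained in two consecutive vertices, and what remains is a path. In `joinPath G C C' l` a
clique meets the new path in at most two consecutive vertices, so every surviving path vertex
reaches a surviving vertex of `C` or of `C'` along the path; if the clique swallows all of `C`,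
it equals `C` by maximality and misses `C'`. The surviving vertices of `G` stay connected by
induction. Since the preimage of a clique under a graph embedding is a clique, the range of an
embedded gate induces a connected subgraph without clique separator, and by finiteness it
extends to a maximal such vertex set, an atom.
-/

namespace SimpleGraph

variable {V W : Type} {G : SimpleGraph V} {H : SimpleGraph W}

theorem not_hasCliqueSep_iff :
    ¬ HasCliqueSep G ↔ ∀ K : Set V, G.IsClique K → (G.induce Kᶜ).Preconnected := by
  simp [HasCliqueSep]

theorem IsClique.comap_embedding (f : H ↪g G) {C : Set V} (hC : G.IsClique C) :
    H.IsClique (f ⁻¹' C) :=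
  fun _ ha _ hb hab => f.map_adj_iff.mp (hC ha hb (f.injective.ne hab))

theorem reachable_induce_compl_of_embedding (hH : ¬ HasCliqueSep H) (f : H ↪g G)
    {C : Set V} (hC : G.IsClique C) {u v : ↑Cᶜ} (hu : ↑u ∈ Set.range f)
    (hv : ↑v ∈ Set.range f) : (G.induce Cᶜ).Reachable u v := by
  obtain ⟨a, ha⟩ := hu
  obtain ⟨b, hb⟩ := hv
  have hmaps : Set.MapsTo f (f ⁻¹' C)ᶜ Cᶜ := fun _ hx => hx
  have hreach := (not_hasCliqueSep_iff.mp hH _ (hC.comap_embedding f)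
    ⟨a, fun h => u.2 (ha ▸ h)⟩ ⟨b, fun h => v.2 (hb ▸ h)⟩).map (induceHom f.toHom hmaps)
  convert hreach <;> exact Subtype.ext (by simp [ha, hb])

theorem not_hasCliqueSep_of_iso (e : H ≃g G) (hH : ¬ HasCliqueSep H) : ¬ HasCliqueSep G :=
  not_hasCliqueSep_iff.mpr fun _ hK u v =>
    reachable_induce_compl_of_embedding hH e.toEmbedding hK (e.surjective u) (e.surjective v)

theorem connected_of_not_hasCliqueSep [Nonempty V] (h : ¬ HasCliqueSep G) : G.Connected := by
  refine Connected.mk fun u v => ?_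
  have hreach := not_hasCliqueSep_iff.mp h ∅ isClique_empty ⟨u, by simp⟩ ⟨v, by simp⟩
  exact hreach.map (Embedding.induce _).toHom

theorem exists_isAtomOf_superset [Finite V] {S : Set V} (hconn : (G.induce S).Connected)
    (hsep : ¬ HasCliqueSep (G.induce S)) : ∃ A, IsAtomOf G A ∧ S ⊆ A := by
  obtain ⟨A, ⟨hSA, hA⟩, hmax⟩ := Set.Finite.exists_maximalFor id
    {B : Set V | S ⊆ B ∧ (G.induce B).Connected ∧ ¬ HasCliqueSep (G.induce B)}
    (Set.toFinite _) ⟨S, subset_rfl, hconn, hsep⟩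
  exact ⟨A, ⟨hA.1, hA.2, fun B hAB hB hB' =>
    le_antisymm hAB (hmax ⟨hSA.trans hAB, hB, hB'⟩ hAB)⟩, hSA⟩

theorem induce_reachable_of_adj_succ {s : Set V} (f : ℕ → V) {i j : ℕ} (hij : i ≤ j)
    (hs : ∀ k, i ≤ k → k ≤ j → f k ∈ s)
    (hadj : ∀ k, i ≤ k → k < j → G.Adj (f k) (f (k + 1)))
    {x y : ↑s} (hx : ↑x = f i) (hy : ↑y = f j) : (G.induce s).Reachable x y := by
  induction j, hij using Nat.le_induction generalizing y with
  | base => exact Subtype.ext (hx.trans hy.symm) ▸ Reachable.refl x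
  | succ j hij ih =>
    have hmid : f j ∈ s := hs j hij (by omega)
    refine (ih (fun k h1 h2 => hs k h1 (by omega)) (fun k h1 h2 => hadj k h1 (by omega))
      (y := ⟨f j, hmid⟩) rfl).trans (Adj.reachable ?_)
    change G.Adj (f j) y
    exact hy ▸ hadj j hij (by omega)

section CycleGraph

open scoped Fin.NatCast Fin.CommRing

variable {m : ℕ}

theorem cycleGraph_adj_add_one (u : Fin (m + 2)) : (cycleGraph (m + 2)).Adj u (u + 1) :=
  cycleGraph_adj.mpr (Or.inr (add_sub_cancel_left u 1))

theorem IsClique.exists_subset_pair_of_cycleGraph (hm : 2 ≤ m) {K : Set (Fin (m + 2))}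
    (hK : (cycleGraph (m + 2)).IsClique K) : ∃ a, K ⊆ {a, a + 1} := by
  rcases K.eq_empty_or_nonempty with rfl | ⟨x, hx⟩
  · exact ⟨0, Set.empty_subset _⟩
  have hnbr : ∀ y ∈ K, y = x ∨ y = x - 1 ∨ y = x + 1 := fun y hy => by
    by_cases hyx : y = x
    · exact Or.inl hyx
    · have := hK hx hy (Ne.symm hyx)
      rw [← mem_neighborSet, cycleGraph_neighborSet] at this
      exact Or.inr this
  have hnot_both : x - 1 ∉ K ∨ x + 1 ∉ K := by
    by_contra! h
    have hne : x - 1 ≠ x + 1 := fun h' => by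
      have h2 : (2 : Fin (m + 2)) = 0 := by linear_combination -h'
      simp [Fin.ext_iff, Nat.mod_eq_of_lt (by omega : 2 < m + 2)] at h2
    rcases cycleGraph_adj.mp (hK h.1 h.2 hne) with h' | h'
    · have h3 : (3 : Fin (m + 2)) = 0 := by linear_combination -h'
      simp [Fin.ext_iff, Nat.mod_eq_of_lt (by omega : 3 < m + 2)] at h3
    · have h1 : (1 : Fin (m + 2)) = 0 := by linear_combination h'
      exact one_ne_zero h1
  rcases hnot_both with h | h
  · refine ⟨x, fun y hy => ?_⟩
    rcases hnbr y hy with rfl | rfl | rfl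
    · exact Or.inl rfl
    · exact absurd hy h
    · exact Or.inr rfl
  · refine ⟨x - 1, fun y hy => ?_⟩
    rcases hnbr y hy with rfl | rfl | rfl
    · exact Or.inr (sub_add_cancel y 1).symm
    · exact Or.inl rfl
    · exact absurd hy h

theorem cycleGraph_induce_compl_preconnected {K : Set (Fin (m + 2))} {a : Fin (m + 2)}
    (hK : K ⊆ {a, a + 1}) : ((cycleGraph (m + 2)).induce Kᶜ).Preconnected := by
  -- Every vertex is `a + j` for exactly one `j ∈ [1, m + 2]`, and only the two ends
  -- `j = 1` and `j = m + 2` can lie in `K`.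
  let f : ℕ → Fin (m + 2) := fun j => a + (j : Fin (m + 2))
  let index : Fin (m + 2) → ℕ := fun u => (u - a - 1).val + 1
  have hf_index : ∀ u, f (index u) = u := fun u => by
    simp only [f, index, Nat.cast_add, Fin.cast_val_eq_self, Nat.cast_one]
    ring
  have hindex : ∀ u, 1 ≤ index u ∧ index u ≤ m + 2 := fun u =>
    ⟨Nat.le_add_left _ _, (u - a - 1).isLt⟩
  have hinner : ∀ j, 2 ≤ j → j ≤ m + 1 → f j ∈ Kᶜ := fun j hj2 hjm hj => by
    have hval : ((j : Fin (m + 2)) : ℕ) = j := Fin.val_cast_of_lt (by omega)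
    rcases hK hj with h | h
    · have h0 : (j : Fin (m + 2)) = 0 := add_eq_left.mp h
      rw [Fin.ext_iff, hval] at h0
      simp at h0; omega
    · have h1 : (j : Fin (m + 2)) = 1 := add_left_cancel (Set.mem_singleton_iff.mp h)
      rw [Fin.ext_iff, hval] at h1
      simp at h1; omega
  suffices h : ∀ u v : ↑Kᶜ, index u ≤ index v →
      ((cycleGraph (m + 2)).induce Kᶜ).Reachable u v by
    intro u v
    rcases le_total (index u) (index v) with huv | hvu
    · exact h u v huv
    · exact (h v u hvu).symm
  intro u v huv
  refine induce_reachable_of_adj_succ f huv (fun k hk1 hk2 => ?_) (fun k _ _ => ?_)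
    (hf_index u).symm (hf_index v).symm
  · rcases hk1.eq_or_lt with rfl | hk1
    · exact (hf_index u).symm ▸ u.2
    rcases hk2.eq_or_lt with rfl | hk2
    · exact (hf_index v).symm ▸ v.2
    exact hinner k (by have := hindex u; omega) (by have := hindex v; omega)
  · simpa [f, add_assoc] using cycleGraph_adj_add_one (f k)

theorem cycleGraph_not_hasCliqueSep {n : ℕ} (hn : 4 ≤ n) : ¬ HasCliqueSep (cycleGraph n) := by
  obtain ⟨m, rfl⟩ : ∃ m, n = m + 2 := ⟨n - 2, by omega⟩
  refine not_hasCliqueSep_iff.mpr fun K hK => ?_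
  obtain ⟨a, ha⟩ := hK.exists_subset_pair_of_cycleGraph (by omega)
  exact cycleGraph_induce_compl_preconnected ha

end CycleGraph

end SimpleGraph

theorem IsMaxClique.nonempty {V : Type} [Nonempty V] {G : SimpleGraph V} {C : Set V}
    (hC : IsMaxClique G C) : C.Nonempty := by
  obtain ⟨v⟩ := ‹Nonempty V›
  rw [Set.nonempty_iff_ne_empty]
  rintro rfl
  exact Set.singleton_ne_empty v
    (hC.2 {v} (SimpleGraph.isClique_singleton v) (Set.empty_subset _)).symm

theorem IsMaxClique.disjoint_of_subset {V : Type} {G : SimpleGraph V} {C D K : Set V}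
    (hC : IsMaxClique G C) (hK : G.IsClique K) (hCK : C ⊆ K) (hdisj : Disjoint C D) :
    Disjoint K D :=
  hC.2 K hK hCK ▸ hdisj

section JoinPath

open SimpleGraph

variable {V : Type} {G : SimpleGraph V} {C C' : Set V} {l : ℕ} {K : Set (V ⊕ Fin l)}

def joinPathInl (G : SimpleGraph V) (C C' : Set V) (l : ℕ) : G ↪g joinPath G C C' l where
  toFun := Sum.inl
  inj' := Sum.inl_injective
  map_rel_iff' := Iff.rfl

theorem joinPath_reachable_inr {x y : ↑Kᶜ} {i j : Fin l} (hx : (x : V ⊕ Fin l) = Sum.inr i)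
    (hy : (y : V ⊕ Fin l) = Sum.inr j)
    (halive : ∀ k : Fin l, min i j ≤ k → k ≤ max i j → Sum.inr k ∉ K) :
    ((joinPath G C C' l).induce Kᶜ).Reachable x y := by
  wlog hij : i ≤ j generalizing x y i j
  · exact (this hy hx (by simpa only [min_comm, max_comm] using halive) (le_of_not_ge hij)).symm
  rw [min_eq_left hij, max_eq_right hij] at halive
  -- the `min` only makes `f` total; it is the identity below `l`
  let f : ℕ → V ⊕ Fin l := fun k => Sum.inr ⟨min k (l - 1), by omega⟩
  have hf : ∀ k : Fin l, f k = Sum.inr k := fun k => by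
    simp only [f, Sum.inr.injEq, Fin.ext_iff]
    omega
  refine induce_reachable_of_adj_succ f (Fin.le_def.mp hij) (fun k hk1 hk2 => ?_)
    (fun k _ hk2 => Or.inl (by simp only; omega))
    (hx.trans (hf i).symm) (hy.trans (hf j).symm)
  have hkl : k < l := by have := j.isLt; omega
  simpa [f, show min k (l - 1) = k by omega] using
    halive ⟨k, hkl⟩ (Fin.le_def.mpr hk1) (Fin.le_def.mpr hk2)

theorem joinPath_isClique_inr_side (hK : (joinPath G C C' l).IsClique K) {j : Fin l}
    (hj : Sum.inr j ∉ K) :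
    (∀ i ≤ j, Sum.inr i ∉ K) ∨ (∀ i, j ≤ i → Sum.inr i ∉ K) := by
  by_contra! h
  obtain ⟨⟨i₁, hi₁j, hi₁⟩, ⟨i₂, hji₂, hi₂⟩⟩ := h
  have h₁ : i₁ < j := lt_of_le_of_ne hi₁j fun h => hj (h ▸ hi₁)
  have h₂ : j < i₂ := lt_of_le_of_ne hji₂ fun h => hj (h ▸ hi₂)
  have hadj := hK hi₁ hi₂ (by simp only [ne_eq, Sum.inr.injEq]; exact (h₁.trans h₂).ne)
  change i₁.val + 1 = i₂.val ∨ i₂.val + 1 = i₁.val at hadj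
  rw [Fin.lt_def] at h₁ h₂
  omega

theorem joinPath_isClique_inr_eq_zero (hK : (joinPath G C C' l).IsClique K)
    (hCne : C.Nonempty) (hdisj : Disjoint C C') (hCK : C ⊆ Sum.inl ⁻¹' K) {i : Fin l}
    (hi : Sum.inr i ∈ K) : i.val = 0 := by
  obtain ⟨c, hc⟩ := hCne
  rcases hK (hCK hc) hi Sum.inl_ne_inr with ⟨h, -⟩ | ⟨-, hc'⟩
  · exact h
  · exact absurd hc' (hdisj.notMem_of_mem_left hc)

theorem joinPath_isClique_inr_eq_last (hK : (joinPath G C C' l).IsClique K)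
    (hC'ne : C'.Nonempty) (hdisj : Disjoint C C') (hC'K : C' ⊆ Sum.inl ⁻¹' K) {i : Fin l}
    (hi : Sum.inr i ∈ K) : i.val = l - 1 := by
  obtain ⟨c', hc'⟩ := hC'ne
  rcases hK (hC'K hc') hi Sum.inl_ne_inr with ⟨-, hc⟩ | ⟨h, -⟩
  · exact absurd hc' (hdisj.notMem_of_mem_left hc)
  · exact h

theorem joinPath_exists_reachable_inl_of_end {x : ↑Kᶜ} {i e : Fin l}
    (hx : (x : V ⊕ Fin l) = Sum.inr i) {c : V} (hc : Sum.inl c ∉ K)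
    (hadj : (joinPath G C C' l).Adj (Sum.inr e) (Sum.inl c))
    (halive : ∀ k : Fin l, min i e ≤ k → k ≤ max i e → Sum.inr k ∉ K) :
    ∃ y : ↑Kᶜ, ↑y ∈ Set.range (joinPathInl G C C' l) ∧
      ((joinPath G C C' l).induce Kᶜ).Reachable x y :=
  ⟨⟨Sum.inl c, hc⟩, ⟨c, rfl⟩, (joinPath_reachable_inr hx
    (y := ⟨Sum.inr e, halive e (min_le_right _ _) (le_max_right _ _)⟩) rfl halive).trans
      (Adj.reachable hadj)⟩

theorem joinPath_exists_reachable_inl [Nonempty V] (hC : IsMaxClique G C)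
    (hC' : IsMaxClique G C') (hdisj : Disjoint C C') (hK : (joinPath G C C' l).IsClique K)
    {x : ↑Kᶜ} {i : Fin l} (hx : (x : V ⊕ Fin l) = Sum.inr i) :
    ∃ y : ↑Kᶜ, ↑y ∈ Set.range (joinPathInl G C C' l) ∧
      ((joinPath G C C' l).induce Kᶜ).Reachable x y := by
  have hi : Sum.inr i ∉ K := hx ▸ x.2
  have hKg : G.IsClique (Sum.inl ⁻¹' K) := hK.comap_embedding (joinPathInl G C C' l)
  have hl : 0 < l := i.pos
  let first : Fin l := ⟨0, hl⟩
  let last : Fin l := ⟨l - 1, by omega⟩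
  have hfirst : first ≤ i := Fin.le_def.mpr (Nat.zero_le _)
  have hlast : i ≤ last := Fin.le_def.mpr (Nat.le_sub_one_of_lt i.isLt)
  by_cases hCK : C ⊆ Sum.inl ⁻¹' K
  · obtain ⟨c', hc'⟩ := hC'.nonempty
    have hc'K : Sum.inl c' ∉ K := (hC.disjoint_of_subset hKg hCK hdisj).notMem_of_mem_right hc'
    refine joinPath_exists_reachable_inl_of_end hx hc'K (e := last) (Or.inr ⟨rfl, hc'⟩)
      fun k hk _ hkK => hi ?_
    have hk0 := joinPath_isClique_inr_eq_zero hK hC.nonempty hdisj hCK hkK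
    rw [min_eq_left hlast, Fin.le_def] at hk
    rwa [show i = k from Fin.ext (by omega)]
  by_cases hC'K : C' ⊆ Sum.inl ⁻¹' K
  · obtain ⟨c, hc⟩ := hC.nonempty
    have hcK : Sum.inl c ∉ K :=
      (hC'.disjoint_of_subset hKg hC'K hdisj.symm).notMem_of_mem_right hc
    refine joinPath_exists_reachable_inl_of_end hx hcK (e := first) (Or.inl ⟨rfl, hc⟩)
      fun k _ hk hkK => hi ?_
    have hkl := joinPath_isClique_inr_eq_last hK hC'.nonempty hdisj hC'K hkK
    rw [max_eq_left hfirst, Fin.le_def] at hk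
    rwa [show i = k from Fin.ext (by have := k.isLt; omega)]
  obtain ⟨c, hcC, hc⟩ := Set.not_subset.mp hCK
  obtain ⟨c', hc'C', hc'⟩ := Set.not_subset.mp hC'K
  rcases joinPath_isClique_inr_side hK hi with h | h
  · exact joinPath_exists_reachable_inl_of_end hx hc (e := first) (Or.inl ⟨rfl, hcC⟩)
      fun k _ hk => h k (max_eq_left hfirst ▸ hk)
  · exact joinPath_exists_reachable_inl_of_end hx hc' (e := last) (Or.inr ⟨rfl, hc'C'⟩)
      fun k hk _ => h k (min_eq_left hlast ▸ hk)

theorem joinPath_not_hasCliqueSep [Nonempty V] (hG : ¬ HasCliqueSep G) (hC : IsMaxClique G C)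
    (hC' : IsMaxClique G C') (hdisj : Disjoint C C') : ¬ HasCliqueSep (joinPath G C C' l) := by
  refine not_hasCliqueSep_iff.mpr fun K hK => ?_
  have hbase : ∀ x : ↑Kᶜ, ∃ y : ↑Kᶜ, ↑y ∈ Set.range (joinPathInl G C C' l) ∧
      ((joinPath G C C' l).induce Kᶜ).Reachable x y := by
    rintro ⟨a | i, hx⟩
    · exact ⟨⟨Sum.inl a, hx⟩, ⟨a, rfl⟩, Reachable.refl _⟩
    · exact joinPath_exists_reachable_inl hC hC' hdisj hK rfl
  intro x y
  obtain ⟨x', hx', hxx'⟩ := hbase x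
  obtain ⟨y', hy', hyy'⟩ := hbase y
  exact hxx'.trans ((reachable_induce_compl_of_embedding hG _ hK hx' hy').trans hyy'.symm)

end JoinPath

theorem IsGate.nonempty {V : Type} {G : SimpleGraph V} (h : IsGate G) : Nonempty V := by
  induction h with
  | cycle n hn => exact ⟨⟨0, by omega⟩⟩
  | extend _ _ _ _ _ _ _ _ _ ih => exact ⟨Sum.inl ih.some⟩
  | iso _ _ _ e ih => exact ⟨e ih.some⟩

theorem IsGate.not_hasCliqueSep {V : Type} {G : SimpleGraph V} (h : IsGate G) :
    ¬ HasCliqueSep G := by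
  induction h with
  | cycle _ hn => exact SimpleGraph.cycleGraph_not_hasCliqueSep hn
  | extend _ _ _ _ hG hC hC' hdisj _ ih =>
    have := hG.nonempty
    exact joinPath_not_hasCliqueSep ih hC hC' hdisj
  | iso _ _ _ e ih => exact SimpleGraph.not_hasCliqueSep_of_iso e ih

theorem stmt14 {V W : Type} [Finite V] (G : SimpleGraph V) (H : SimpleGraph W)
    (hH : IsGate H) (f : H ↪g G) :
    (∃ A : Set V, IsAtomOf G A ∧ Set.range ⇑f ⊆ A) ∧
    ∀ C : Set V, G.IsClique C →
      ∀ u v : ↑Cᶜ, ↑u ∈ Set.range ⇑f → ↑v ∈ Set.range ⇑f →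
        (G.induce Cᶜ).Reachable u v := by
  have hsep := hH.not_hasCliqueSep
  refine ⟨?_, fun C hC u v hu hv =>
    SimpleGraph.reachable_induce_compl_of_embedding hsep f hC hu hv⟩
  have hrange := SimpleGraph.not_hasCliqueSep_of_iso f.isoInduceRange hsep
  have := hH.nonempty
  exact SimpleGraph.exists_isAtomOf_superset
    (SimpleGraph.connected_of_not_hasCliqueSep hrange) hrange
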